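/- Let p ≥ 1 and c ≥ 1 be real numbers and for ν ∈ ℝ define I_{p,c}(ν) = (1/Γ(c)) ∫₀^∞ t^{c−1} e^{p(t−ν)} / (1 + e^{t−ν})^{2p} dt. Then there exist constants 0 < c₀ ≤ C₀ depending only on p and c such that for all ν ∈ ℝ: if ν ≥ 0 then c₀ ⟨ν⟩^{c−1} ≤ I_{p,c}(ν) ≤ C₀ ⟨ν⟩^{c−1}, and if ν < 0 then c₀ e^{pν} ≤ I_{p,c}(ν) ≤ C₀ e^{pν}. -/

import Mathlib

open MeasureTheory

open Set Real in
/-- pointwise upper bound -/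
private lemma fd_upper {p : ℝ} (hp : 1 ≤ p) (s : ℝ) :
    exp (p * s) / (1 + exp s) ^ (2 * p) ≤ exp (-(p * |s|)) := by
  have hp0 : 0 < p := by linarith
  have hE : (0:ℝ) < exp s := exp_pos s
  have hD : (0:ℝ) < (1 + exp s) ^ (2*p) := rpow_pos_of_pos (by linarith) _
  rcases le_or_gt 0 s with h | h
  · rw [abs_of_nonneg h, div_le_iff₀ hD]
    have h2 : exp s ^ (2*p) = exp (2*p*s) := by
      rw [Real.rpow_def_of_pos hE, Real.log_exp]; ring_nf
    have h1 : exp (2*p*s) ≤ (1 + exp s) ^ (2*p) := by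
      rw [← h2]
      exact rpow_le_rpow hE.le (by linarith) (by positivity)
    calc exp (p*s) = exp (-(p*s)) * exp (2*p*s) := by rw [← exp_add]; ring_nf
    _ ≤ exp (-(p*s)) * (1 + exp s) ^ (2*p) :=
        mul_le_mul_of_nonneg_left h1 (exp_nonneg _)
  · rw [abs_of_neg h, div_le_iff₀ hD]
    have h1 : (1:ℝ) ≤ (1 + exp s) ^ (2*p) := by
      calc (1:ℝ) = 1 ^ (2*p) := (one_rpow _).symm
      _ ≤ (1 + exp s) ^ (2*p) := rpow_le_rpow zero_le_one (by linarith) (by positivity)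
    calc exp (p*s) = exp (p*s) * 1 := (mul_one _).symm
    _ ≤ exp (-(p * -s)) * (1 + exp s) ^ (2*p) := by
        rw [show -(p * -s) = p * s by ring]
        exact mul_le_mul_of_nonneg_left h1 (exp_nonneg _)

open Set Real in
private lemma four_rpow {p : ℝ} : ((4:ℝ) ^ (-p)) * (4:ℝ) ^ p = 1 := by
  rw [← Real.rpow_add (by norm_num)]; simp

open Set Real in
/-- pointwise lower bound -/
private lemma fd_lower {p : ℝ} (hp : 1 ≤ p) (s : ℝ) :
    (4:ℝ) ^ (-p) * exp (-(p * |s|)) ≤ exp (p * s) / (1 + exp s) ^ (2 * p) := by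
  have hp0 : 0 < p := by linarith
  have hE : (0:ℝ) < exp s := exp_pos s
  have hD : (0:ℝ) < (1 + exp s) ^ (2*p) := rpow_pos_of_pos (by linarith) _
  have h4 : (0:ℝ) < (4:ℝ) ^ (-p) := rpow_pos_of_pos (by norm_num) _
  have h24 : ((2:ℝ)) ^ (2*p) = (4:ℝ) ^ p := by
    rw [show (4:ℝ) = 2*2 by norm_num, Real.mul_rpow (by norm_num) (by norm_num),
      show (2:ℝ)*p = p+p by ring, Real.rpow_add (by norm_num)]
  rcases le_or_gt 0 s with h | h
  · rw [abs_of_nonneg h, le_div_iff₀ hD]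
    have hb : (1 + exp s) ^ (2*p) ≤ (4:ℝ)^p * exp (2*p*s) := by
      have h2 : exp s ^ (2*p) = exp (2*p*s) := by
        rw [Real.rpow_def_of_pos hE, Real.log_exp]; ring_nf
      calc (1 + exp s) ^ (2*p) ≤ (2 * exp s) ^ (2*p) := by
            apply rpow_le_rpow (by linarith) _ (by positivity)
            have : (1:ℝ) ≤ exp s := by
              rw [show (1:ℝ) = exp 0 by simp]; exact exp_le_exp.2 h
            linarith
      _ = (2:ℝ)^(2*p) * exp s ^ (2*p) := mul_rpow (by norm_num) hE.le
      _ = (4:ℝ)^p * exp (2*p*s) := by rw [h24, h2]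
    calc (4:ℝ)^(-p) * exp (-(p*s)) * (1 + exp s) ^ (2*p)
        ≤ (4:ℝ)^(-p) * exp (-(p*s)) * ((4:ℝ)^p * exp (2*p*s)) :=
          mul_le_mul_of_nonneg_left hb (by positivity)
    _ = ((4:ℝ)^(-p) * (4:ℝ)^p) * (exp (-(p*s)) * exp (2*p*s)) := by ring
    _ = exp (p*s) := by rw [four_rpow, ← exp_add, one_mul]; ring_nf
  · rw [abs_of_neg h, le_div_iff₀ hD]
    have hb : (1 + exp s) ^ (2*p) ≤ (4:ℝ)^p := by
      have : exp s ≤ 1 := by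
        rw [show (1:ℝ) = exp 0 by simp]; exact exp_le_exp.2 h.le
      calc (1 + exp s) ^ (2*p) ≤ (2:ℝ) ^ (2*p) :=
            rpow_le_rpow (by linarith) (by linarith) (by positivity)
      _ = (4:ℝ)^p := h24
    calc (4:ℝ)^(-p) * exp (-(p * -s)) * (1 + exp s) ^ (2*p)
        ≤ (4:ℝ)^(-p) * exp (-(p * -s)) * (4:ℝ)^p :=
          mul_le_mul_of_nonneg_left hb (by positivity)
    _ = ((4:ℝ)^(-p) * (4:ℝ)^p) * exp (p*s) := by ring_nf
    _ = exp (p*s) := by rw [four_rpow, one_mul]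

open Set Real in
/-- translation of integrals over `Ioi` -/
private lemma shift_Ioi (f : ℝ → ℝ) (ν : ℝ) :
    (∫ t in Ioi ν, f (t - ν)) = ∫ s in Ioi (0:ℝ), f s ∧
      (IntegrableOn f (Ioi (0:ℝ)) → IntegrableOn (fun t => f (t - ν)) (Ioi ν)) := by
  have key : (Ioi ν).indicator (fun t => f (t - ν)) = fun t => (Ioi 0).indicator f (t - ν) := by
    funext t
    by_cases h : t ∈ Ioi ν
    · rw [Set.indicator_of_mem h, Set.indicator_of_mem]
      simpa [Set.mem_Ioi, sub_pos] using h
    · rw [Set.indicator_of_notMem h, Set.indicator_of_notMem]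
      simpa [Set.mem_Ioi, sub_pos] using h
  constructor
  · rw [← integral_indicator measurableSet_Ioi, key,
      integral_sub_right_eq_self (fun t => (Ioi (0:ℝ)).indicator f t) ν,
      integral_indicator measurableSet_Ioi]
  · intro hf
    have h1 : Integrable ((Ioi (0:ℝ)).indicator f) :=
      (integrable_indicator_iff measurableSet_Ioi).2 hf
    have h2 := h1.comp_sub_right ν
    rw [← integrable_indicator_iff measurableSet_Ioi, key]
    exact h2

open Set Real in
private lemma add_rpow_le {a b r : ℝ} (ha : 0 ≤ a) (hb : 0 ≤ b) (hr : 0 ≤ r) :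
    (a + b) ^ r ≤ 2 ^ r * (a ^ r + b ^ r) := by
  have h1 : (a + b) ^ r ≤ (2 * max a b) ^ r := by
    apply rpow_le_rpow (by linarith)
    · rcases le_total a b with h | h
      · rw [max_eq_right h]; linarith
      · rw [max_eq_left h]; linarith
    · exact hr
  have h2 : (2 * max a b) ^ r = 2 ^ r * (max a b) ^ r :=
    mul_rpow (by norm_num) (le_max_of_le_left ha)
  have h3 : (max a b) ^ r ≤ a ^ r + b ^ r := by
    rcases max_cases a b with ⟨h, _⟩ | ⟨h, _⟩ <;> rw [h]
    · nlinarith [rpow_nonneg hb r]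
    · nlinarith [rpow_nonneg ha r]
  calc (a + b) ^ r ≤ 2 ^ r * (max a b) ^ r := by rw [← h2]; exact h1
  _ ≤ 2 ^ r * (a ^ r + b ^ r) := by
      apply mul_le_mul_of_nonneg_left h3 (by positivity)

open Set Real in
private lemma int_gamma {c : ℝ} (hc : 1 ≤ c) :
    IntegrableOn (fun t : ℝ => t ^ (c-1) * exp (-t)) (Ioi (0:ℝ)) :=
  (Real.GammaIntegral_convergent (by linarith : (0:ℝ) < c)).congr_fun
    (fun t _ => mul_comm _ _) measurableSet_Ioi

open Set Real in
private lemma int_gamma_p {p c : ℝ} (hp : 1 ≤ p) (hc : 1 ≤ c) :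
    IntegrableOn (fun t : ℝ => t ^ (c-1) * exp (-(p*t))) (Ioi (0:ℝ)) := by
  apply Integrable.mono (int_gamma hc) (Measurable.aestronglyMeasurable (by fun_prop))
  filter_upwards [ae_restrict_mem measurableSet_Ioi] with t ht
  have ht0 : (0:ℝ) < t := ht
  rw [Real.norm_eq_abs, Real.norm_eq_abs, abs_of_nonneg (by positivity),
    abs_of_nonneg (by positivity)]
  apply mul_le_mul_of_nonneg_left _ (rpow_nonneg ht0.le _)
  exact exp_le_exp.2 (by nlinarith)

open Set Real in
/-- sandwich on the integrand -/
private lemma g_sandwich {p c : ℝ} (hp : 1 ≤ p) (hc : 1 ≤ c) (ν : ℝ) {t : ℝ} (ht : 0 < t) :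
    (4:ℝ)^(-p) * (t ^ (c-1) * exp (-(p * |t - ν|))) ≤
      t ^ (c-1) * exp (p*(t-ν)) / (1 + exp (t-ν)) ^ (2*p) ∧
    t ^ (c-1) * exp (p*(t-ν)) / (1 + exp (t-ν)) ^ (2*p) ≤
      t ^ (c-1) * exp (-(p * |t - ν|)) := by
  have htc : (0:ℝ) ≤ t ^ (c-1) := rpow_nonneg ht.le _
  rw [mul_div_assoc]
  constructor
  · calc (4:ℝ)^(-p) * (t ^ (c-1) * exp (-(p * |t - ν|)))
        = t ^ (c-1) * ((4:ℝ)^(-p) * exp (-(p * |t - ν|))) := by ring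
    _ ≤ t ^ (c-1) * (exp (p*(t-ν)) / (1 + exp (t-ν)) ^ (2*p)) :=
        mul_le_mul_of_nonneg_left (fd_lower hp _) htc
  · exact mul_le_mul_of_nonneg_left (fd_upper hp _) htc

open Set Real in
private lemma g_int {p c : ℝ} (hp : 1 ≤ p) (hc : 1 ≤ c) (ν : ℝ) :
    IntegrableOn (fun t : ℝ => t ^ (c-1) * exp (p*(t-ν)) / (1 + exp (t-ν)) ^ (2*p))
      (Ioi (0:ℝ)) := by
  apply Integrable.mono ((int_gamma hc).const_mul (exp (p*|ν|))) (Measurable.aestronglyMeasurable (by fun_prop))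
  filter_upwards [ae_restrict_mem measurableSet_Ioi] with t ht
  have ht0 : (0:ℝ) < t := ht
  have htc : (0:ℝ) ≤ t ^ (c-1) := rpow_nonneg ht0.le _
  have hD : (0:ℝ) < (1 + exp (t-ν)) ^ (2*p) := rpow_pos_of_pos (by positivity) _
  rw [Real.norm_eq_abs, Real.norm_eq_abs, abs_of_nonneg (by positivity),
    abs_of_nonneg (by positivity)]
  calc t ^ (c-1) * exp (p*(t-ν)) / (1 + exp (t-ν)) ^ (2*p)
      ≤ t ^ (c-1) * exp (-(p * |t - ν|)) := (g_sandwich hp hc ν ht0).2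
  _ ≤ exp (p*|ν|) * (t ^ (c-1) * exp (-t)) := by
      rw [show exp (p*|ν|) * (t ^ (c-1) * exp (-t)) = t ^ (c-1) * (exp (p*|ν|) * exp (-t)) by
        ring, ← exp_add]
      apply mul_le_mul_of_nonneg_left _ htc
      apply exp_le_exp.2
      have h1 : t - |ν| ≤ |t - ν| := by
        rcases abs_cases ν with ⟨h, _⟩ | ⟨h, _⟩ <;> rcases abs_cases (t - ν) with ⟨h2, _⟩ | ⟨h2, _⟩ <;>
          nlinarith
      nlinarith [abs_nonneg ν, abs_nonneg (t - ν)]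

/-- The Fermi–Dirac integral-type quantity
`I_{p,c}(ν) = (1/Γ(c)) ∫₀^∞ t^{c−1} e^{p(t−ν)} / (1 + e^{t−ν})^{2p} dt`. -/
noncomputable def Ipc (p c ν : ℝ) : ℝ :=
  (1 / Real.Gamma c) *
    ∫ t in Set.Ioi (0 : ℝ),
      t ^ (c - 1) * Real.exp (p * (t - ν)) / (1 + Real.exp (t - ν)) ^ (2 * p)

set_option maxHeartbeats 1000000 in
open Set Real in
theorem stmt_2 (p c : ℝ) (hp : 1 ≤ p) (hc : 1 ≤ c) :
    ∃ c₀ C₀ : ℝ, 0 < c₀ ∧ c₀ ≤ C₀ ∧ ∀ ν : ℝ,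
      (0 ≤ ν →
        c₀ * Real.sqrt (1 + ν ^ 2) ^ (c - 1) ≤ Ipc p c ν ∧
          Ipc p c ν ≤ C₀ * Real.sqrt (1 + ν ^ 2) ^ (c - 1)) ∧
      (ν < 0 →
        c₀ * Real.exp (p * ν) ≤ Ipc p c ν ∧
          Ipc p c ν ≤ C₀ * Real.exp (p * ν)) := by
  have hp0 : 0 < p := by linarith
  have hc1 : (0:ℝ) ≤ c - 1 := by linarith
  have hG : 0 < Real.Gamma c := Real.Gamma_pos_of_pos (by linarith)
  have h4 : (0:ℝ) < (4:ℝ)^(-p) := rpow_pos_of_pos (by norm_num) _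
  have hs2 : (0:ℝ) < (Real.sqrt 2)^(c-1) := rpow_pos_of_pos (sqrt_pos.2 two_pos) _
  have h2c : (0:ℝ) < (2:ℝ)^(c-1) := rpow_pos_of_pos two_pos _
  obtain ⟨G, hGdef⟩ : ∃ x : ℝ, x = Real.Gamma c := ⟨_, rfl⟩
  rw [← hGdef] at hG
  obtain ⟨c₁, hc₁⟩ : ∃ x : ℝ, x = G⁻¹ * ((4:ℝ)^(-p) * Real.exp (-(2*p)) * ((Real.sqrt 2)^(c-1))⁻¹) := ⟨_, rfl⟩
  obtain ⟨C₁, hC₁⟩ : ∃ x : ℝ, x = G⁻¹ * (1 + 2^(c-1) * (1 + G)) := ⟨_, rfl⟩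
  obtain ⟨c₂, hc₂⟩ : ∃ x : ℝ, x = (4:ℝ)^(-p) * (1/p)^c := ⟨_, rfl⟩
  obtain ⟨C₂, hC₂⟩ : ∃ x : ℝ, x = (1/p)^c := ⟨_, rfl⟩
  have hc₁0 : 0 < c₁ := by rw [hc₁]; positivity
  have hc₂0 : 0 < c₂ := by rw [hc₂]; positivity
  have key : ∀ ν : ℝ,
      (0 ≤ ν →
        min c₁ c₂ * Real.sqrt (1 + ν ^ 2) ^ (c - 1) ≤ Ipc p c ν ∧
          Ipc p c ν ≤ max C₁ C₂ * Real.sqrt (1 + ν ^ 2) ^ (c - 1)) ∧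
      (ν < 0 →
        min c₁ c₂ * Real.exp (p * ν) ≤ Ipc p c ν ∧
          Ipc p c ν ≤ max C₁ C₂ * Real.exp (p * ν)) := by
    intro ν
    have hIpc : Ipc p c ν = G⁻¹ *
        ∫ t in Ioi (0:ℝ), t ^ (c - 1) * exp (p * (t - ν)) / (1 + exp (t - ν)) ^ (2 * p) := by
      rw [Ipc, one_div, hGdef]
    have hint := g_int hp hc ν
    constructor
    · -- ν ≥ 0 case
      intro hν
      obtain ⟨S, hSdef⟩ : ∃ x : ℝ, x = Real.sqrt (1 + ν ^ 2) ^ (c - 1) := ⟨_, rfl⟩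
      rw [← hSdef]
      have hsq1 : (1:ℝ) ≤ Real.sqrt (1 + ν^2) := by
        nlinarith [Real.sq_sqrt (show (0:ℝ) ≤ 1 + ν^2 by positivity),
          Real.sqrt_nonneg (1 + ν^2), sq_nonneg ν]
      have hS0 : 0 < S := by rw [hSdef]; exact rpow_pos_of_pos (by linarith) _
      have hS1 : 1 ≤ S := by
        rw [hSdef]
        calc (1:ℝ) = 1 ^ (c-1) := (one_rpow _).symm
        _ ≤ _ := rpow_le_rpow zero_le_one hsq1 hc1
      have hνS : ν ^ (c-1) ≤ S := by
        rw [hSdef]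
        apply rpow_le_rpow hν _ hc1
        calc ν = Real.sqrt (ν^2) := by rw [Real.sqrt_sq hν]
        _ ≤ Real.sqrt (1 + ν^2) := Real.sqrt_le_sqrt (by nlinarith)
      constructor
      · -- lower bound
        have hm1 : (0:ℝ) < max 1 ν := lt_of_lt_of_le one_pos (le_max_left _ _)
        have hlow : (max 1 ν)^(c-1) * ((4:ℝ)^(-p) * exp (-(2*p))) ≤
            ∫ t in Ioi (0:ℝ), t ^ (c - 1) * exp (p * (t - ν)) / (1 + exp (t - ν)) ^ (2 * p) := by
          have hsub : Ioc (ν+1) (ν+2) ⊆ Ioi (0:ℝ) := by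
            intro t ht
            simp only [mem_Ioc, mem_Ioi] at *
            linarith [ht.1]
          have h1 : (∫ t in Ioc (ν+1) (ν+2),
                t ^ (c - 1) * exp (p * (t - ν)) / (1 + exp (t - ν)) ^ (2 * p)) ≤
              ∫ t in Ioi (0:ℝ), t ^ (c - 1) * exp (p * (t - ν)) / (1 + exp (t - ν)) ^ (2 * p) := by
            apply setIntegral_mono_set hint _ (HasSubset.Subset.eventuallyLE hsub)
            filter_upwards [ae_restrict_mem measurableSet_Ioi] with t ht
            have ht0 : (0:ℝ) < t := ht
            have hD : (0:ℝ) < (1 + exp (t-ν)) ^ (2*p) := rpow_pos_of_pos (by positivity) _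
            exact div_nonneg (mul_nonneg (rpow_nonneg ht0.le _) (exp_nonneg _)) hD.le
          have h2 : (max 1 ν)^(c-1) * ((4:ℝ)^(-p) * exp (-(2*p))) *
                (volume (Ioc (ν+1) (ν+2))).toReal ≤
              ∫ t in Ioc (ν+1) (ν+2),
                t ^ (c - 1) * exp (p * (t - ν)) / (1 + exp (t - ν)) ^ (2 * p) := by
            apply setIntegral_ge_of_const_le_real measurableSet_Ioc measure_Ioc_lt_top.ne _
              (hint.mono_set hsub)
            intro t ht
            obtain ⟨ht1, ht2⟩ := ht
            have ht0 : (0:ℝ) < t := by linarith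
            have hm : max 1 ν ≤ t := max_le (by linarith) (by linarith)
            calc (max 1 ν)^(c-1) * ((4:ℝ)^(-p) * exp (-(2*p)))
                ≤ t^(c-1) * ((4:ℝ)^(-p) * exp (-(p * |t-ν|))) := by
                  apply mul_le_mul (rpow_le_rpow hm1.le hm hc1) _ (by positivity)
                    (rpow_nonneg ht0.le _)
                  apply mul_le_mul_of_nonneg_left _ h4.le
                  apply exp_le_exp.2
                  rw [abs_of_nonneg (by linarith)]
                  nlinarith
            _ = (4:ℝ)^(-p) * (t^(c-1) * exp (-(p * |t-ν|))) := by ring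
            _ ≤ t ^ (c - 1) * exp (p * (t - ν)) / (1 + exp (t - ν)) ^ (2 * p) :=
                (g_sandwich hp hc ν ht0).1
          have hvol : (volume (Ioc (ν+1) (ν+2))).toReal = 1 := by
            rw [Real.volume_Ioc]
            norm_num
          rw [hvol, mul_one] at h2
          exact h2.trans h1
        have hsqle : Real.sqrt (1+ν^2) ≤ Real.sqrt 2 * max 1 ν := by
          have heq : Real.sqrt 2 * max 1 ν = Real.sqrt (2 * (max 1 ν)^2) := by
            rw [Real.sqrt_mul (by norm_num), Real.sqrt_sq hm1.le]
          rw [heq]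
          apply Real.sqrt_le_sqrt
          rcases le_total ν 1 with h | h
          · rw [max_eq_left h]
            have h2 : ν*ν ≤ 1*1 := mul_le_mul h h hν zero_le_one
            have h3 : ν^2 ≤ 1 := by rw [sq]; linarith
            simp only [one_pow]
            linarith
          · rw [max_eq_right h]
            have h2 : (1:ℝ)*1 ≤ ν*ν := mul_le_mul h h zero_le_one (by linarith)
            have h3 : (1:ℝ) ≤ ν^2 := by rw [sq]; linarith
            linarith
        have hSle : S ≤ (Real.sqrt 2)^(c-1) * (max 1 ν)^(c-1) := by
          rw [hSdef]
          calc Real.sqrt (1 + ν ^ 2) ^ (c - 1) ≤ (Real.sqrt 2 * max 1 ν)^(c-1) :=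
                rpow_le_rpow (Real.sqrt_nonneg _) hsqle hc1
          _ = _ := mul_rpow (Real.sqrt_nonneg _) hm1.le
        calc min c₁ c₂ * S ≤ c₁ * S := mul_le_mul_of_nonneg_right (min_le_left _ _) hS0.le
        _ ≤ c₁ * ((Real.sqrt 2)^(c-1) * (max 1 ν)^(c-1)) :=
            mul_le_mul_of_nonneg_left hSle hc₁0.le
        _ = G⁻¹ * ((max 1 ν)^(c-1) * ((4:ℝ)^(-p) * exp (-(2*p)))) := by
            rw [hc₁, show G⁻¹ * ((4:ℝ)^(-p) * exp (-(2*p)) * ((Real.sqrt 2)^(c-1))⁻¹) *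
              ((Real.sqrt 2)^(c-1) * (max 1 ν)^(c-1)) =
              G⁻¹ * ((max 1 ν)^(c-1) * ((4:ℝ)^(-p) * exp (-(2*p)))) *
              (((Real.sqrt 2)^(c-1))⁻¹ * (Real.sqrt 2)^(c-1)) by ring,
              inv_mul_cancel₀ hs2.ne', mul_one]
        _ ≤ Ipc p c ν := by
            rw [hIpc]
            exact mul_le_mul_of_nonneg_left hlow (inv_nonneg.2 hG.le)
      · -- upper bound
        have hsplit : (∫ t in Ioi (0:ℝ),
              t ^ (c - 1) * exp (p * (t - ν)) / (1 + exp (t - ν)) ^ (2 * p)) =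
            (∫ t in Ioc 0 ν, t ^ (c - 1) * exp (p * (t - ν)) / (1 + exp (t - ν)) ^ (2 * p)) +
            ∫ t in Ioi ν, t ^ (c - 1) * exp (p * (t - ν)) / (1 + exp (t - ν)) ^ (2 * p) := by
          rw [← Ioc_union_Ioi_eq_Ioi hν]
          exact setIntegral_union (Ioc_disjoint_Ioi le_rfl) measurableSet_Ioi
            (hint.mono_set Ioc_subset_Ioi_self) (hint.mono_set (Ioi_subset_Ioi hν))
        have hA : (∫ t in Ioc (0:ℝ) ν,
              t ^ (c - 1) * exp (p * (t - ν)) / (1 + exp (t - ν)) ^ (2 * p)) ≤ ν^(c-1) := by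
          have hmono : (∫ t in Ioc (0:ℝ) ν,
                t ^ (c - 1) * exp (p * (t - ν)) / (1 + exp (t - ν)) ^ (2 * p)) ≤
              ∫ t in Ioc (0:ℝ) ν, ν^(c-1) * exp (t - ν) := by
            apply setIntegral_mono_on (hint.mono_set Ioc_subset_Ioi_self)
              ((Continuous.integrableOn_Ioc (by continuity))) measurableSet_Ioc
            intro t ht
            obtain ⟨ht0, htν⟩ := ht
            calc t ^ (c - 1) * exp (p * (t - ν)) / (1 + exp (t - ν)) ^ (2 * p)
                ≤ t^(c-1) * exp (-(p * |t-ν|)) := (g_sandwich hp hc ν ht0).2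
            _ ≤ ν^(c-1) * exp (t - ν) := by
                apply mul_le_mul (rpow_le_rpow ht0.le htν hc1) _ (exp_nonneg _)
                  (rpow_nonneg (le_trans ht0.le htν) _)
                apply exp_le_exp.2
                rw [abs_of_nonpos (by linarith)]
                nlinarith
          have hval : (∫ t in Ioc (0:ℝ) ν, ν^(c-1) * exp (t - ν)) =
              ν^(c-1) * (1 - exp (-ν)) := by
            rw [← intervalIntegral.integral_of_le hν, intervalIntegral.integral_const_mul,
              intervalIntegral.integral_comp_sub_right (fun x => exp x) ν,
              integral_exp]
            simp
          rw [hval] at hmono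
          nlinarith [exp_pos (-ν), rpow_nonneg hν (c-1)]
        have he_exp : IntegrableOn (fun x : ℝ => exp (-x)) (Ioi (0:ℝ)) := by
          simpa using exp_neg_integrableOn_Ioi 0 one_pos
        have hF1 : IntegrableOn (fun s : ℝ => 2^(c-1) * (ν^(c-1) * exp (-s))) (Ioi (0:ℝ)) :=
          (he_exp.const_mul _).const_mul _
        have hF2 : IntegrableOn (fun s : ℝ => 2^(c-1) * (s^(c-1) * exp (-s))) (Ioi (0:ℝ)) :=
          (int_gamma hc).const_mul _
        have hFint : IntegrableOn
            (fun s : ℝ => 2^(c-1) * (ν^(c-1) * exp (-s)) + 2^(c-1) * (s^(c-1) * exp (-s)))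
            (Ioi (0:ℝ)) := hF1.add hF2
        have hgam1 : (∫ s in Ioi (0:ℝ), s^(c-1) * exp (-s)) = G := by
          rw [hGdef]
          have := integral_rpow_mul_exp_neg_mul_Ioi (show (0:ℝ) < c by linarith) one_pos
          simpa using this
        have hFval : (∫ s in Ioi (0:ℝ),
            (2^(c-1) * (ν^(c-1) * exp (-s)) + 2^(c-1) * (s^(c-1) * exp (-s)))) =
            2^(c-1) * ν^(c-1) + 2^(c-1) * G := by
          rw [integral_add hF1 hF2, integral_const_mul, integral_const_mul,
            integral_const_mul, integral_exp_neg_Ioi_zero, hgam1]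
          ring
        have hshift := shift_Ioi
          (fun s : ℝ => 2^(c-1) * (ν^(c-1) * exp (-s)) + 2^(c-1) * (s^(c-1) * exp (-s))) ν
        have hB : (∫ t in Ioi ν,
              t ^ (c - 1) * exp (p * (t - ν)) / (1 + exp (t - ν)) ^ (2 * p)) ≤
            2^(c-1) * ν^(c-1) + 2^(c-1) * G := by
          have hmono : (∫ t in Ioi ν,
                t ^ (c - 1) * exp (p * (t - ν)) / (1 + exp (t - ν)) ^ (2 * p)) ≤
              ∫ t in Ioi ν,
                (2^(c-1) * (ν^(c-1) * exp (-(t-ν))) + 2^(c-1) * ((t-ν)^(c-1) * exp (-(t-ν)))) := by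
            apply setIntegral_mono_on (hint.mono_set (Ioi_subset_Ioi hν)) (hshift.2 hFint)
              measurableSet_Ioi
            intro t ht
            have htν : (0:ℝ) ≤ t - ν := by
              simp only [mem_Ioi] at ht
              linarith
            have ht0 : (0:ℝ) < t := lt_of_le_of_lt hν ht
            calc t ^ (c - 1) * exp (p * (t - ν)) / (1 + exp (t - ν)) ^ (2 * p)
                ≤ t^(c-1) * exp (-(p * |t-ν|)) := (g_sandwich hp hc ν ht0).2
            _ ≤ (2^(c-1) * (ν^(c-1)) + 2^(c-1) * ((t-ν)^(c-1))) * exp (-(t-ν)) := by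
                apply mul_le_mul _ _ (exp_nonneg _) (by positivity)
                · have h := add_rpow_le hν htν hc1
                  calc t^(c-1) = (ν + (t-ν))^(c-1) := by ring_nf
                  _ ≤ 2^(c-1) * (ν^(c-1) + (t-ν)^(c-1)) := h
                  _ = 2^(c-1) * (ν^(c-1)) + 2^(c-1) * ((t-ν)^(c-1)) := by ring
                · apply exp_le_exp.2
                  rw [abs_of_nonneg htν]
                  nlinarith
            _ = 2^(c-1) * (ν^(c-1) * exp (-(t-ν))) + 2^(c-1) * ((t-ν)^(c-1) * exp (-(t-ν))) := by
                ring
          exact hmono.trans (le_of_eq (hshift.1.trans hFval))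
        have hIub : (∫ t in Ioi (0:ℝ),
              t ^ (c - 1) * exp (p * (t - ν)) / (1 + exp (t - ν)) ^ (2 * p)) ≤
            (1 + 2^(c-1) * (1 + G)) * S := by
          rw [hsplit]
          nlinarith [mul_le_mul_of_nonneg_left hνS h2c.le,
            mul_le_mul_of_nonneg_left hS1 (mul_pos h2c hG).le]
        calc Ipc p c ν ≤ G⁻¹ * ((1 + 2^(c-1) * (1 + G)) * S) := by
              rw [hIpc]
              exact mul_le_mul_of_nonneg_left hIub (inv_nonneg.2 hG.le)
        _ = C₁ * S := by rw [hC₁]; ring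
        _ ≤ max C₁ C₂ * S := mul_le_mul_of_nonneg_right (le_max_left _ _) hS0.le
    · -- ν < 0 case
      intro hν
      have hval : (∫ t in Ioi (0:ℝ), t^(c-1) * exp (-(p*t))) = (1/p)^c * G := by
        rw [hGdef]
        exact integral_rpow_mul_exp_neg_mul_Ioi (show (0:ℝ) < c by linarith) hp0
      have heq : ∀ t ∈ Ioi (0:ℝ),
          t^(c-1) * exp (-(p * |t-ν|)) = exp (p*ν) * (t^(c-1) * exp (-(p*t))) := by
        intro t ht
        have ht0 : (0:ℝ) < t := ht
        rw [abs_of_pos (by linarith), show exp (p*ν) * (t^(c-1) * exp (-(p*t))) =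
          t^(c-1) * (exp (p*ν) * exp (-(p*t))) by ring, ← exp_add,
          show p*ν + -(p*t) = -(p*(t-ν)) by ring]
      constructor
      · -- lower
        have hmono : (∫ t in Ioi (0:ℝ), ((4:ℝ)^(-p) * exp (p*ν)) * (t^(c-1) * exp (-(p*t)))) ≤
            ∫ t in Ioi (0:ℝ), t ^ (c - 1) * exp (p * (t - ν)) / (1 + exp (t - ν)) ^ (2 * p) := by
          apply setIntegral_mono_on ((int_gamma_p hp hc).const_mul _) hint measurableSet_Ioi
          intro t ht
          have ht0 : (0:ℝ) < t := ht
          calc ((4:ℝ)^(-p) * exp (p*ν)) * (t^(c-1) * exp (-(p*t)))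
              = (4:ℝ)^(-p) * (exp (p*ν) * (t^(c-1) * exp (-(p*t)))) := by ring
          _ = (4:ℝ)^(-p) * (t^(c-1) * exp (-(p * |t-ν|))) := by rw [← heq t ht]
          _ ≤ _ := (g_sandwich hp hc ν ht0).1
        rw [integral_const_mul, hval] at hmono
        calc min c₁ c₂ * exp (p*ν) ≤ c₂ * exp (p*ν) :=
              mul_le_mul_of_nonneg_right (min_le_right _ _) (exp_nonneg _)
        _ = G⁻¹ * ((4:ℝ)^(-p) * exp (p*ν) * ((1/p)^c * G)) := by
            rw [hc₂, show G⁻¹ * ((4:ℝ)^(-p) * exp (p*ν) * ((1/p)^c * G)) =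
              ((4:ℝ)^(-p) * (1/p)^c) * exp (p*ν) * (G⁻¹ * G) by ring,
              inv_mul_cancel₀ hG.ne', mul_one]
        _ ≤ Ipc p c ν := by
            rw [hIpc]
            exact mul_le_mul_of_nonneg_left hmono (inv_nonneg.2 hG.le)
      · -- upper
        have hmono : (∫ t in Ioi (0:ℝ),
              t ^ (c - 1) * exp (p * (t - ν)) / (1 + exp (t - ν)) ^ (2 * p)) ≤
            ∫ t in Ioi (0:ℝ), exp (p*ν) * (t^(c-1) * exp (-(p*t))) := by
          apply setIntegral_mono_on hint ((int_gamma_p hp hc).const_mul _) measurableSet_Ioi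
          intro t ht
          have ht0 : (0:ℝ) < t := ht
          calc t ^ (c - 1) * exp (p * (t - ν)) / (1 + exp (t - ν)) ^ (2 * p)
              ≤ t^(c-1) * exp (-(p * |t-ν|)) := (g_sandwich hp hc ν ht0).2
          _ = exp (p*ν) * (t^(c-1) * exp (-(p*t))) := heq t ht
        rw [integral_const_mul, hval] at hmono
        calc Ipc p c ν ≤ G⁻¹ * (exp (p*ν) * ((1/p)^c * G)) := by
              rw [hIpc]
              exact mul_le_mul_of_nonneg_left hmono (inv_nonneg.2 hG.le)
        _ = C₂ * exp (p*ν) := by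
            rw [hC₂, show G⁻¹ * (exp (p*ν) * ((1/p)^c * G)) =
              (1/p)^c * exp (p*ν) * (G⁻¹ * G) by ring,
              inv_mul_cancel₀ hG.ne', mul_one]
        _ ≤ max C₁ C₂ * exp (p*ν) :=
            mul_le_mul_of_nonneg_right (le_max_right _ _) (exp_nonneg _)
  refine ⟨min c₁ c₂, max C₁ C₂, lt_min hc₁0 hc₂0, ?_, key⟩
  have h0 := (key 0).1 le_rfl
  have hone : Real.sqrt (1 + (0:ℝ)^2) ^ (c-1) = 1 := by
    norm_num
  rw [hone, mul_one, mul_one] at h0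
  linarith [h0.1, h0.2]
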